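/- Let D be an odd diagram and suppose x ◁ y ◁ z is a saturated chain in Bruhat order with x, y, z all having odd diagram D. Then every element of the Bruhat interval [x, z] has odd diagram D. -/

import Mathlib

def oddDiagram {n : ℕ} (w : Equiv.Perm (Fin n)) : Finset (Fin n × Fin n) :=
  Finset.univ.filter (fun p => (p.2 : ℕ) < (w p.1 : ℕ) ∧ (p.1 : ℕ) < (w.symm p.2 : ℕ) ∧
    (p.1 : ℕ) % 2 ≠ (w.symm p.2 : ℕ) % 2)

def invLength {n : ℕ} (w : Equiv.Perm (Fin n)) : ℕ :=
  (Finset.univ.filter (fun p : Fin n × Fin n => p.1 < p.2 ∧ w p.2 < w p.1)).card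

def bruhatLE {n : ℕ} : Equiv.Perm (Fin n) → Equiv.Perm (Fin n) → Prop :=
  Relation.ReflTransGen (fun u v => ∃ t : Equiv.Perm (Fin n), t.IsSwap ∧ v = u * t ∧ invLength u < invLength v)

def contains213 {n : ℕ} (w : Equiv.Perm (Fin n)) : Prop :=
  ∃ i h j : Fin n, i < h ∧ h < j ∧ w h < w i ∧ w i < w j

def contains312 {n : ℕ} (w : Equiv.Perm (Fin n)) : Prop :=
  ∃ i h j : Fin n, i < h ∧ h < j ∧ w h < w j ∧ w j < w i

def bruhatLT {n : ℕ} : Equiv.Perm (Fin n) → Equiv.Perm (Fin n) → Prop :=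
  Relation.TransGen (fun u v => ∃ t : Equiv.Perm (Fin n), t.IsSwap ∧ v = u * t ∧ invLength u < invLength v)

def bruhatCov {n : ℕ} (u v : Equiv.Perm (Fin n)) : Prop :=
  bruhatLT u v ∧ invLength v = invLength u + 1

/-!
Write `ℓ` for `invLength`. Comparing inversion sets gives, for `e < f` and `w e < w f`,
`ℓ (w (e f)) = ℓ w + 1 + 2 #{k ∈ (e, f) : w e < w k < w f}`; so the covers of `w` are the
`w (e f)` with `w e < w f` and no value of `w` strictly between them at a position between
`e` and `f`. For such a cover, `oddDiagram (w (e f)) = oddDiagram w` holds exactly when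
`OddSwapCondition w e f` does: `e ≡ f (mod 2)`, and every position `k > e` of the other parity
carries either a value below `w e`, or a value above `w f` and lies to the right of `f`.

Write `y = x (a b)` and `z = y (c d)`. An element `u` of `[x, z]` other than `x` and `z` covers
`x` and is covered by `z`, so `u = x (e f)` and `z = u (g h)`, whence `(a b)(c d) = (e f)(g h)`.
If `(a b)` and `(c d)` are disjoint, this forces `(e, f) = (a, b)` or `(c, d)`; otherwise
`e` and `f` are two of the three points moved by the 3-cycle `(a b)(c d)`. In every case the
conditions for `(x, a, b)` and `(y, c, d)`, together with the cover conditions, give the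
condition for `(x, e, f)`.
-/

open Equiv Finset

namespace OddDiagram

variable {n : ℕ}

def inversions (w : Perm (Fin n)) : Finset (Fin n × Fin n) :=
  univ.filter fun p => p.1 < p.2 ∧ w p.2 < w p.1

lemma card_inversions (w : Perm (Fin n)) : (inversions w).card = invLength w := rfl

lemma mem_inversions {w : Perm (Fin n)} {p : Fin n × Fin n} :
    p ∈ inversions w ↔ p.1 < p.2 ∧ w p.2 < w p.1 := by
  simp [inversions]

def sortPair (p : Fin n × Fin n) : Fin n × Fin n :=
  if p.1 < p.2 then p else (p.2, p.1)

lemma invLength_mul_add_of_involutive (w : Perm (Fin n)) {τ : Perm (Fin n)}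
    (hτ : Function.Involutive τ) :
    invLength (w * τ) + 2 * (inversions τ ∩ inversions w).card = invLength w + invLength τ := by
  -- `(i, j) ↦ sortPair (τ i, τ j)` is an involution on increasing pairs, sending the inversions
  -- of `w * τ` onto the pairs that are inversions of exactly one of `τ` and `w`
  have hbij : (inversions (w * τ)).card =
      ((inversions τ ∪ inversions w) \ (inversions τ ∩ inversions w)).card := by
    refine card_nbij' (fun p => sortPair (τ p.1, τ p.2)) (fun p => sortPair (τ p.1, τ p.2))
      ?_ ?_ ?_ ?_ <;> rintro ⟨i, j⟩ hp <;>
      simp only [coe_sdiff, coe_union, coe_inter, Set.mem_sdiff, Set.mem_union, Set.mem_inter_iff,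
        mem_coe, mem_inversions, Perm.mul_apply, sortPair] at hp ⊢ <;>
      have := hτ i <;> have := hτ j <;> have := τ.apply_eq_iff_eq (x := i) (y := j) <;>
      have := w.apply_eq_iff_eq (x := i) (y := j) <;>
      have := w.apply_eq_iff_eq (x := τ i) (y := τ j) <;> grind
  have := card_sdiff_add_card_eq_card (inter_subset_union (s := inversions τ) (t := inversions w))
  have := card_union_add_card_inter (inversions τ) (inversions w)
  rw [← card_inversions, ← card_inversions, ← card_inversions, hbij]
  omega

lemma mem_inversions_swap {e f : Fin n} (hef : e < f) {p : Fin n × Fin n} :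
    p ∈ inversions (swap e f) ↔
      p = (e, f) ∨ (p.1 = e ∧ p.2 ∈ Ioo e f) ∨ (p.1 ∈ Ioo e f ∧ p.2 = f) := by
  rcases p with ⟨i, j⟩
  simp only [mem_inversions, swap_apply_def, mem_Ioo, Prod.mk.injEq]
  split_ifs <;> omega

lemma card_inversions_swap_inter {e f : Fin n} (hef : e < f) (S : Finset (Fin n × Fin n)) :
    (inversions (swap e f) ∩ S).card = (if (e, f) ∈ S then 1 else 0) +
      ((Ioo e f).filter fun k => (e, k) ∈ S).card +
      ((Ioo e f).filter fun k => (k, f) ∈ S).card := by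
  have hdecomp : inversions (swap e f) ∩ S = ({(e, f)} : Finset _).filter (· ∈ S) ∪
      ((Ioo e f).filter fun k => (e, k) ∈ S).map ⟨(e, ·), Prod.mk_right_injective e⟩ ∪
      ((Ioo e f).filter fun k => (k, f) ∈ S).map ⟨(·, f), Prod.mk_left_injective f⟩ := by
    ext ⟨i, j⟩
    simp only [mem_inter, mem_inversions_swap hef, mem_union, mem_filter, mem_singleton, mem_map,
      Function.Embedding.coeFn_mk, Prod.mk.injEq]
    grind
  rw [hdecomp, card_union_of_disjoint, card_union_of_disjoint, card_map, card_map,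
    filter_singleton]
  · split_ifs <;> rfl
  all_goals
    simp only [disjoint_left, mem_union, mem_filter, mem_singleton, mem_map, mem_Ioo,
      Function.Embedding.coeFn_mk]
    grind

lemma invLength_mul_swap {w : Perm (Fin n)} {e f : Fin n} (hef : e < f) (hv : w e < w f) :
    invLength (w * swap e f) =
      invLength w + 1 + 2 * ((Ioo e f).filter fun k => w e < w k ∧ w k < w f).card := by
  have hmaster := invLength_mul_add_of_involutive w (τ := swap e f) (swap_apply_self e f)
  have hswap := card_inversions_swap_inter hef univ
  simp only [inter_univ, card_inversions, mem_univ, filter_true, if_true] at hswap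
  have hinter := card_inversions_swap_inter hef (inversions w)
  simp only [mem_inversions, not_lt_of_gt hv, and_false, if_false, zero_add] at hinter
  have hsplit : ((Ioo e f).filter fun k => e < k ∧ w k < w e).card +
      ((Ioo e f).filter fun k => k < f ∧ w f < w k).card +
      ((Ioo e f).filter fun k => w e < w k ∧ w k < w f).card = (Ioo e f).card := by
    rw [card_filter, card_filter, card_filter, card_eq_sum_ones, ← sum_add_distrib,
      ← sum_add_distrib]
    refine sum_congr rfl fun k hk => ?_
    have hke : w k ≠ w e := w.injective.ne (mem_Ioo.1 hk).1.ne'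
    have hkf : w k ≠ w f := w.injective.ne (mem_Ioo.1 hk).2.ne
    rw [mem_Ioo] at hk
    split_ifs <;> omega
  omega

lemma invLength_mul_swap_lt {w : Perm (Fin n)} {e f : Fin n} (hef : e < f) (hv : w f < w e) :
    invLength (w * swap e f) < invLength w := by
  have h := invLength_mul_swap (w := w * swap e f) hef (by simpa using hv)
  rw [mul_assoc, swap_mul_self, mul_one] at h
  omega

lemma invLength_mul_swap_eq_succ_iff {w : Perm (Fin n)} {e f : Fin n} (hef : e < f) :
    invLength (w * swap e f) = invLength w + 1 ↔
      w e < w f ∧ ∀ k, e < k → k < f → ¬(w e < w k ∧ w k < w f) := by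
  rcases lt_or_gt_of_ne (w.injective.ne hef.ne) with hv | hv
  · rw [invLength_mul_swap hef hv]
    simp [hv, filter_eq_empty_iff]
  · have := invLength_mul_swap_lt hef hv
    constructor
    · omega
    · rintro ⟨h, -⟩; exact absurd h (not_lt_of_gt hv)

lemma mem_oddDiagram {w : Perm (Fin n)} {i j : Fin n} :
    (i, j) ∈ oddDiagram w ↔
      j < w i ∧ i < w.symm j ∧ (i : ℕ) % 2 ≠ (w.symm j : ℕ) % 2 := by
  simp [oddDiagram]

lemma symm_mul_swap_apply (w : Perm (Fin n)) (e f j : Fin n) :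
    (w * swap e f).symm j = swap e f (w.symm j) := by
  simp [Perm.mul_def]

def OddSwapCondition (w : Perm (Fin n)) (e f : Fin n) : Prop :=
  (e : ℕ) % 2 = (f : ℕ) % 2 ∧
    ∀ k, e < k → (k : ℕ) % 2 ≠ (f : ℕ) % 2 → w k < w e ∨ (f < k ∧ w f < w k)

lemma oddSwapCondition_of_oddDiagram_mul_swap_eq {w : Perm (Fin n)} {e f : Fin n} (hef : e < f)
    (hv : w e < w f) (hD : oddDiagram (w * swap e f) = oddDiagram w) :
    OddSwapCondition w e f := by
  have hcell : ∀ i k, (i, w k) ∈ oddDiagram (w * swap e f) → (i, w k) ∈ oddDiagram w :=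
    fun i k h => hD ▸ h
  have hpar : (e : ℕ) % 2 = (f : ℕ) % 2 := by
    by_contra hne
    have := hcell e e
    simp only [mem_oddDiagram, symm_mul_swap_apply, symm_apply_apply, Perm.mul_apply,
      swap_apply_left] at this
    omega
  refine ⟨hpar, fun k hek hk => ?_⟩
  have hke : k ≠ e := by rintro rfl; exact hk hpar
  have hkf : k ≠ f := by rintro rfl; exact hk rfl
  by_contra! hbad
  have hwk : w e < w k := lt_of_le_of_ne hbad.1 (w.injective.ne hke.symm)
  rcases lt_or_gt_of_ne (w.injective.ne hkf) with hlt | hgt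
  · -- the cell `(e, w k)` lies in the odd diagram of `w * swap e f` only
    have := hcell e k
    simp only [mem_oddDiagram, symm_mul_swap_apply, symm_apply_apply, Perm.mul_apply,
      swap_apply_left, swap_apply_of_ne_of_ne hke hkf] at this
    omega
  · -- the cell `(k, w e)` lies in the odd diagram of `w * swap e f` only
    have := hcell k e
    simp only [mem_oddDiagram, symm_mul_swap_apply, symm_apply_apply, Perm.mul_apply,
      swap_apply_left, swap_apply_of_ne_of_ne hke hkf] at this
    omega

lemma oddDiagram_mul_swap_eq_iff {w : Perm (Fin n)} {e f : Fin n} (hef : e < f)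
    (hv : w e < w f) :
    oddDiagram (w * swap e f) = oddDiagram w ↔ OddSwapCondition w e f := by
  refine ⟨oddSwapCondition_of_oddDiagram_mul_swap_eq hef hv, fun ⟨hpar, hcond⟩ => ?_⟩
  ext ⟨i, j⟩
  obtain ⟨k, rfl⟩ := w.surjective j
  have hi := hcond i
  have hk := hcond k
  have hik := w.apply_eq_iff_eq (x := i) (y := k)
  simp only [mem_oddDiagram, symm_mul_swap_apply, symm_apply_apply, Perm.mul_apply,
    swap_apply_def]
  split_ifs <;> grind

lemma invLength_le_of_bruhatLE {u v : Perm (Fin n)} (h : bruhatLE u v) :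
    invLength u ≤ invLength v := by
  induction h with
  | refl => rfl
  | tail _ hstep ih => obtain ⟨_, _, _, hlt⟩ := hstep; exact ih.trans hlt.le

lemma eq_of_bruhatLE_of_invLength_le {u v : Perm (Fin n)} (h : bruhatLE u v)
    (hle : invLength v ≤ invLength u) : u = v := by
  rcases Relation.ReflTransGen.cases_head h with rfl | ⟨w, ⟨_, _, _, hlt⟩, hwv⟩
  · rfl
  · have := invLength_le_of_bruhatLE hwv
    omega

lemma exists_swap_of_bruhatLE_of_invLength_eq_succ {u v : Perm (Fin n)} (h : bruhatLE u v)
    (hlen : invLength v = invLength u + 1) : ∃ e f, e < f ∧ v = u * swap e f := by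
  rcases Relation.ReflTransGen.cases_head h with rfl | ⟨w, ⟨t, ⟨p, q, hpq, rfl⟩, rfl, hlt⟩, hwv⟩
  · omega
  · have := invLength_le_of_bruhatLE hwv
    obtain rfl := eq_of_bruhatLE_of_invLength_le hwv (by omega)
    rcases lt_or_gt_of_ne hpq with hpq | hqp
    · exact ⟨p, q, hpq, rfl⟩
    · exact ⟨q, p, hqp, by rw [swap_comm]⟩

lemma exists_swap_of_bruhatCov {u v : Perm (Fin n)} (h : bruhatCov u v) :
    ∃ e f, e < f ∧ v = u * swap e f :=
  exists_swap_of_bruhatLE_of_invLength_eq_succ h.1.to_reflTransGen h.2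

section Configurations

variable {x : Perm (Fin n)} {a b c d : Fin n}

lemma oddSwapCondition_of_chain (hab : a < b) (hbd : b < d) (hv : x a < x b)
    (Hx : OddSwapCondition x a b) (Hy : OddSwapCondition (x * swap a b) b d) :
    OddSwapCondition x a d ∧ OddSwapCondition x b d := by
  obtain ⟨hpx, Hx⟩ := Hx
  obtain ⟨hpy, Hy⟩ := Hy
  refine ⟨⟨by omega, fun k hk hpk => ?_⟩, ⟨hpy, fun k hk hpk => ?_⟩⟩
  · rcases lt_or_gt_of_ne (show k ≠ b by rintro rfl; omega) with hkb | hkb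
    · have := Hx k hk (by omega)
      omega
    · have := Hy k hkb hpk
      simp only [Perm.mul_apply, swap_apply_def] at this
      split_ifs at this <;> omega
  · have := Hy k hk hpk
    simp only [Perm.mul_apply, swap_apply_def] at this
    split_ifs at this <;> omega

lemma oddSwapCondition_of_reverse_chain (hca : c < a) (hab : a < b) (hv : x a < x b)
    (Hx : OddSwapCondition x a b) (Hy : OddSwapCondition (x * swap a b) c a) :
    OddSwapCondition x c a ∧ OddSwapCondition x c b := by
  obtain ⟨hpx, Hx⟩ := Hx
  obtain ⟨hpy, Hy⟩ := Hy
  refine ⟨⟨hpy, fun k hk hpk => ?_⟩, ⟨by omega, fun k hk hpk => ?_⟩⟩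
  · have := Hy k hk hpk
    simp only [Perm.mul_apply, swap_apply_def] at this
    split_ifs at this <;> omega
  · have hx := fun hak => Hx k hak hpk
    have := Hy k hk (by omega)
    simp only [Perm.mul_apply, swap_apply_def] at this
    split_ifs at this <;> omega

lemma oddSwapCondition_of_common_left (hab : a < b) (had : a < d) (hbd : b ≠ d)
    (Hx : OddSwapCondition x a b) (Hy : OddSwapCondition (x * swap a b) a d) :
    OddSwapCondition x a d ∧ (b < d → OddSwapCondition x b d) := by
  obtain ⟨hpx, Hx⟩ := Hx
  obtain ⟨hpy, Hy⟩ := Hy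
  refine ⟨⟨hpy, fun k hk hpk => ?_⟩, fun hbd' => ⟨by omega, fun k hk hpk => ?_⟩⟩
  · have hy := fun hak => Hy k hak hpk
    have := Hx k hk (by omega)
    simp only [Perm.mul_apply, swap_apply_def] at hy
    split_ifs at hy <;> omega
  · have := Hy k (by omega) hpk
    simp only [Perm.mul_apply, swap_apply_def] at this
    split_ifs at this <;> omega

lemma oddSwapCondition_of_common_right (hab : a < b) (hcb : c < b) (hca : c ≠ a)
    (Hx : OddSwapCondition x a b) (Hy : OddSwapCondition (x * swap a b) c b) :
    OddSwapCondition x c b ∧ (c < a → OddSwapCondition x c a) := by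
  obtain ⟨hpx, Hx⟩ := Hx
  obtain ⟨hpy, Hy⟩ := Hy
  refine ⟨⟨hpy, fun k hk hpk => ?_⟩, fun hca' => ⟨by omega, fun k hk hpk => ?_⟩⟩
  · have hx := fun hak => Hx k hak hpk
    have := Hy k hk hpk
    simp only [Perm.mul_apply, swap_apply_def] at this
    split_ifs at this <;> omega
  · have := Hy k hk (by omega)
    simp only [Perm.mul_apply, swap_apply_def] at this
    split_ifs at this <;> omega

lemma oddSwapCondition_of_disjoint (hab : a < b) (hcd : c < d)
    (hac : a ≠ c) (had : a ≠ d) (hbc : b ≠ c) (hbd : b ≠ d)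
    (hpab : (a : ℕ) % 2 = (b : ℕ) % 2) (hvab : x a < x b)
    (hcovab : ∀ k, a < k → k < b → ¬(x a < x k ∧ x k < x b))
    (hcovcd : ∀ k, c < k → k < d → ¬(x c < x k ∧ x k < x d))
    (Hy : OddSwapCondition (x * swap a b) c d) :
    OddSwapCondition x c d := by
  obtain ⟨hpy, Hy⟩ := Hy
  refine ⟨hpy, fun k hk hpk => ?_⟩
  -- only `k ∈ {a, b}` needs work: there the conditions for `x * swap a b` at `a` and `b` and the
  -- two cover conditions (at `c` and at `k`) leave no room for `x k`
  have hya := fun hca => Hy a hca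
  have hyb := fun hcb => Hy b hcb
  have hyk := Hy k hk hpk
  have hc := hcovab c
  have hk := hcovcd k
  simp only [Perm.mul_apply, swap_apply_left, swap_apply_right,
    swap_apply_of_ne_of_ne hac.symm hbc.symm, swap_apply_of_ne_of_ne had.symm hbd.symm] at hya hyb hyk
  have := x.injective.ne hac
  have := x.injective.ne had
  have := x.injective.ne hbc
  have := x.injective.ne hbd
  rw [swap_apply_def] at hyk
  split_ifs at hyk with hka hkb
  · subst hka; omega
  · subst hkb; omega
  · exact hyk

end Configurations

section Transpositions

variable {α : Type*} [DecidableEq α]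

lemma swap_mul_swap_apply_ne_self {e f g h : α} (hef : e ≠ f) (hgh : g ≠ h)
    (hne : swap e f * swap g h ≠ 1) : (swap e f * swap g h) e ≠ e := by
  intro hfix
  rw [Perm.mul_apply] at hfix
  by_cases heg : e = g
  · subst heg
    rw [swap_apply_left, swap_apply_eq_iff, swap_apply_left] at hfix
    exact hne (by rw [hfix, swap_mul_self])
  by_cases heh : e = h
  · subst heh
    rw [swap_apply_right, swap_apply_eq_iff, swap_apply_left] at hfix
    exact hne (by rw [hfix, swap_comm, swap_mul_self])
  rw [swap_apply_of_ne_of_ne heg heh, swap_apply_left] at hfix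
  exact hef hfix.symm

lemma eq_or_eq_of_swap_mul_swap_apply_ne {a b c d k : α} (h : (swap a b * swap c d) k ≠ k) :
    k = a ∨ k = b ∨ k = c ∨ k = d := by
  contrapose! h
  rw [Perm.mul_apply, swap_apply_of_ne_of_ne h.2.2.1 h.2.2.2, swap_apply_of_ne_of_ne h.1 h.2.1]

lemma swap_mul_swap_apply_left_of_involutive {e f g h : α} (hef : e ≠ f) (hgh : g ≠ h)
    (hne : swap e f * swap g h ≠ 1) (hinv : Function.Involutive (swap e f * swap g h)) :
    (swap e f * swap g h) e = f := by
  by_cases hegh : e = g ∨ e = h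
  · -- then `swap e f * swap g h` is a 3-cycle through `e` and `f`, not an involution
    exfalso
    have hσ := hinv e
    rcases hegh with rfl | rfl
    · have hhf : h ≠ f := by rintro rfl; exact hne (swap_mul_self _ _)
      simp only [Perm.mul_apply, swap_apply_left, swap_apply_right,
        swap_apply_of_ne_of_ne hgh.symm hhf] at hσ
      exact hef hσ.symm
    · have hgf : g ≠ f := by rintro rfl; exact hne (by rw [swap_comm, swap_mul_self])
      simp only [Perm.mul_apply, swap_apply_left, swap_apply_right,
        swap_apply_of_ne_of_ne hgh hgf] at hσ
      exact hef hσ.symm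
  · push Not at hegh
    rw [Perm.mul_apply, swap_apply_of_ne_of_ne hegh.1 hegh.2, swap_apply_left]

lemma swap_mul_swap_involutive {a b c d : α} (hab : a ≠ b) (hcd : c ≠ d) (hac : a ≠ c)
    (had : a ≠ d) (hbc : b ≠ c) (hbd : b ≠ d) :
    Function.Involutive (swap a b * swap c d) := by
  have hsq : (swap a b * swap c d) ^ 2 = 1 := by
    rw [(Perm.disjoint_swap_swap (by simp [*])).commute.mul_pow, sq, sq, swap_mul_self,
      swap_mul_self, mul_one]
  intro k
  rw [← Perm.mul_apply, ← sq, hsq, Perm.one_apply]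

lemma eq_or_eq_of_swap_mul_swap_eq {a b c d e f g h : α} (hef : e ≠ f) (hgh : g ≠ h)
    (hsq : swap a b * swap c d = swap e f * swap g h) (hne : swap a b * swap c d ≠ 1) :
    (e = a ∨ e = b ∨ e = c ∨ e = d) ∧ (f = a ∨ f = b ∨ f = c ∨ f = d) := by
  rw [hsq] at hne
  refine ⟨eq_or_eq_of_swap_mul_swap_apply_ne ?_, eq_or_eq_of_swap_mul_swap_apply_ne ?_⟩
  · rw [hsq]
    exact swap_mul_swap_apply_ne_self hef hgh hne
  · rw [hsq, swap_comm e f]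
    exact swap_mul_swap_apply_ne_self hef.symm hgh (by rwa [swap_comm])

end Transpositions

lemma eq_and_eq_of_swap_mul_swap_eq_of_disjoint {α : Type*} [LinearOrder α]
    {a b c d e f g h : α} (hab : a < b) (hcd : c < d) (hef : e < f) (hgh : g ≠ h)
    (hac : a ≠ c) (had : a ≠ d) (hbc : b ≠ c) (hbd : b ≠ d)
    (hsq : swap a b * swap c d = swap e f * swap g h) :
    (e = a ∧ f = b) ∨ (e = c ∧ f = d) := by
  have hne : swap a b * swap c d ≠ 1 := fun h1 => by
    have := congrArg (· a) h1
    simp only [Perm.mul_apply, swap_apply_of_ne_of_ne hac had, swap_apply_left,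
      Perm.one_apply] at this
    exact hab.ne this.symm
  obtain ⟨he, -⟩ := eq_or_eq_of_swap_mul_swap_eq hef.ne hgh hsq hne
  -- `f` is the partner of `e` in the involution `swap a b * swap c d`
  have hfe := swap_mul_swap_apply_left_of_involutive hef.ne hgh (hsq ▸ hne)
    (hsq ▸ swap_mul_swap_involutive hab.ne hcd.ne hac had hbc hbd)
  rw [← hsq] at hfe
  rcases he with rfl | rfl | rfl | rfl
  · simp only [Perm.mul_apply, swap_apply_of_ne_of_ne hac had, swap_apply_left] at hfe
    exact Or.inl ⟨rfl, hfe.symm⟩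
  · simp only [Perm.mul_apply, swap_apply_of_ne_of_ne hbc hbd, swap_apply_right] at hfe
    exact absurd (hfe ▸ hef) (not_lt_of_gt hab)
  · simp only [Perm.mul_apply, swap_apply_left, swap_apply_of_ne_of_ne had.symm hbd.symm] at hfe
    exact Or.inr ⟨rfl, hfe.symm⟩
  · simp only [Perm.mul_apply, swap_apply_right, swap_apply_of_ne_of_ne hac.symm hbc.symm] at hfe
    exact absurd (hfe ▸ hef) (not_lt_of_gt hcd)

lemma oddSwapCondition_of_swap_mul_swap_eq {x : Perm (Fin n)} {a b c d e f g h : Fin n}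
    (hab : a < b) (hcd : c < d) (hef : e < f) (hgh : g ≠ h)
    (hsq : swap a b * swap c d = swap e f * swap g h) (hne : swap a b * swap c d ≠ 1)
    (hvab : x a < x b) (hcovab : ∀ k, a < k → k < b → ¬(x a < x k ∧ x k < x b))
    (hvcd : (x * swap a b) c < (x * swap a b) d)
    (hvef : x e < x f) (hcovef : ∀ k, e < k → k < f → ¬(x e < x k ∧ x k < x f))
    (Hx : OddSwapCondition x a b) (Hy : OddSwapCondition (x * swap a b) c d) :
    OddSwapCondition x e f := by
  obtain ⟨he, hf⟩ := eq_or_eq_of_swap_mul_swap_eq hef.ne hgh hsq hne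
  -- in the four cases where `{a, b}` and `{c, d}` share a point, every pair `e < f` of the three
  -- points is either excluded by `x e < x f` or covered by the configuration lemma
  rcases eq_or_ne a c with rfl | hac
  · have hbd : b ≠ d := by rintro rfl; exact hne (swap_mul_self a b)
    obtain ⟨Had, Hbd⟩ := oddSwapCondition_of_common_left hab hcd hbd Hx Hy
    simp only [Perm.mul_apply, swap_apply_left, swap_apply_of_ne_of_ne hcd.ne' hbd.symm] at hvcd
    rcases he with rfl | rfl | rfl | rfl <;> rcases hf with rfl | rfl | rfl | rfl <;>
      first | assumption | omega | exact Hbd hef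
  rcases eq_or_ne a d with rfl | had
  · obtain ⟨Hca, Hcb⟩ := oddSwapCondition_of_reverse_chain hcd hab hvab Hx Hy
    rcases he with rfl | rfl | rfl | rfl <;> rcases hf with rfl | rfl | rfl | rfl <;>
      first | assumption | omega
  rcases eq_or_ne b c with rfl | hbc
  · obtain ⟨Had, Hbd⟩ := oddSwapCondition_of_chain hab hcd hvab Hx Hy
    rcases he with rfl | rfl | rfl | rfl <;> rcases hf with rfl | rfl | rfl | rfl <;>
      first | assumption | omega
  rcases eq_or_ne b d with rfl | hbd
  · obtain ⟨Hcb, Hca⟩ := oddSwapCondition_of_common_right hab hcd hac.symm Hx Hy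
    simp only [Perm.mul_apply, swap_apply_right, swap_apply_of_ne_of_ne hac.symm hcd.ne] at hvcd
    rcases he with rfl | rfl | rfl | rfl <;> rcases hf with rfl | rfl | rfl | rfl <;>
      first | assumption | omega | exact Hca hef
  rcases eq_and_eq_of_swap_mul_swap_eq_of_disjoint hab hcd hef hgh hac had hbc hbd hsq with
    ⟨rfl, rfl⟩ | ⟨rfl, rfl⟩
  · exact Hx
  · exact oddSwapCondition_of_disjoint hab hcd hac had hbc hbd Hx.1 hvab hcovab hcovef Hy

end OddDiagram

open OddDiagram

theorem stmt15 {n : ℕ} (x y z : Equiv.Perm (Fin n))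
    (hxy : bruhatCov x y) (hyz : bruhatCov y z)
    (hy : oddDiagram y = oddDiagram x) (hz : oddDiagram z = oddDiagram x) :
    ∀ u : Equiv.Perm (Fin n), bruhatLE x u → bruhatLE u z →
      oddDiagram u = oddDiagram x := by
  obtain ⟨a, b, hab, rfl⟩ := exists_swap_of_bruhatCov hxy
  obtain ⟨c, d, hcd, rfl⟩ := exists_swap_of_bruhatCov hyz
  intro u hxu huz
  have hxu' := invLength_le_of_bruhatLE hxu
  have huz' := invLength_le_of_bruhatLE huz
  have hlen_xy := hxy.2
  have hlen_yz := hyz.2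
  have hlxy := (invLength_mul_swap_eq_succ_iff hab).1 hlen_xy
  have hlyz := (invLength_mul_swap_eq_succ_iff hcd).1 hlen_yz
  obtain hux | hux | hux : invLength u = invLength x ∨ invLength u = invLength x + 1 ∨
      invLength u = invLength x + 2 := by omega
  · rw [← eq_of_bruhatLE_of_invLength_le hxu hux.le]
  · obtain ⟨e, f, hef, rfl⟩ := exists_swap_of_bruhatLE_of_invLength_eq_succ hxu hux
    obtain ⟨g, h, hgh, hsq⟩ := exists_swap_of_bruhatLE_of_invLength_eq_succ huz (by omega)
    rw [mul_assoc, mul_assoc, mul_right_inj] at hsq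
    have hne : swap a b * swap c d ≠ 1 := fun h1 => by
      rw [mul_assoc, h1, mul_one] at hlen_yz
      omega
    have hlu := (invLength_mul_swap_eq_succ_iff hef).1 hux
    rw [oddDiagram_mul_swap_eq_iff hef hlu.1]
    exact oddSwapCondition_of_swap_mul_swap_eq hab hcd hef hgh.ne hsq hne hlxy.1 hlxy.2 hlyz.1
      hlu.1 hlu.2 ((oddDiagram_mul_swap_eq_iff hab hlxy.1).1 hy)
      ((oddDiagram_mul_swap_eq_iff hcd hlyz.1).1 (hz.trans hy.symm))
  · rw [eq_of_bruhatLE_of_invLength_le huz (by omega), hz]
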